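/- arXiv:2011.07716 — 5 statements merged into one kernel-verified Lean document; each statement's English description precedes it below -/
import Mathlib

section
/- Let G be a finite group, R a commutative ring, S a G-Galois algebra over R (i.e., S is an étale R-algebra with G-action making Spec S an étale G-torsor over Spec R), and x a normal element of S. Then the group U_G(R) = {u = Σ_g a_g[g] ∈ R[G]^× : Σ_g a_g = 1} acts freely and transitively on the set of normal elements of S: every normal element of S is of the form Σ_g a_g g(x) for a unique u = Σ_g a_g[g] ∈ U_G(R). -/
open scoped TensorProduct

/-- The canonical map `S ⊗[R] S → (G → S)`, `s ⊗ t ↦ (g ↦ s * g(t))`.  A `G`-algebra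
`S/R` is an étale `G`-torsor (a `G`-Galois algebra) precisely when this map is bijective
and the `G`-invariants of `S` are `R`. -/
noncomputable def galoisMap (R S : Type*) [CommRing R] [CommRing S] [Algebra R S]
    (G : Type*) [Group G] (ρ : G →* (S ≃ₐ[R] S)) : S ⊗[R] S →ₗ[R] (G → S) :=
  TensorProduct.lift <| LinearMap.mk₂ R (fun s t => fun g => s * ρ g t)
    (fun s s' t => by funext g; simp [add_mul])
    (fun c s t => by funext g; simp [smul_mul_assoc])
    (fun s t t' => by funext g; simp [map_add, mul_add])
    (fun c s t => by funext g; simp [map_smul, mul_smul_comm])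

/-!
A normal element `x` of `S` is exactly an element for which `w ↦ w • x` is an isomorphism of
`R`-modules `R[G] ≃ S`, i.e. a free generator of `S` as an `R[G]`-module. If `x` and `y` are both
free generators and `u • x = y`, then choosing `v` with `v • y = x` gives `(v * u) • x = x` and
`(u * v) • y = y`, so `u` is a unit. The coefficients of `u` sum to `1` because every `g ∈ G`
preserves the trace, so `tr y = ε(u) tr x`.
-/

open Function

theorem isUnit_of_apply_eq_of_bijective {F A R M : Type*} [Monoid A] [Semiring R]
    [AddCommMonoid M] [Module R M] [FunLike F A (Module.End R M)] [MonoidHomClass F A _] (φ : F)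
    {x y : M} (hx : Bijective fun a => φ a x) (hy : Bijective fun a => φ a y) {u : A} (hu : φ u x = y) :
    IsUnit u := by
  obtain ⟨v, hv : φ v y = x⟩ := hy.surjective x
  have hvu : v * u = 1 := hx.injective <| by
    simp only [map_mul, map_one, Module.End.mul_apply, Module.End.one_apply, hu, hv]
  have huv : u * v = 1 := hy.injective <| by
    simp only [map_mul, map_one, Module.End.mul_apply, Module.End.one_apply, hv, hu]
  exact ⟨⟨u, v, huv, hvu⟩, rfl⟩

theorem Representation.bijective_asAlgebraHom_apply_of_basis {R G M : Type*} [CommRing R]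
    [Group G] [AddCommGroup M] [Module R M] (ρ : Representation R G M) {x : M}
    (b : Module.Basis G R M) (hb : ∀ g, b g = ρ g x) :
    Bijective fun w => ρ.asAlgebraHom w x := by
  have hL : (LinearMap.applyₗ x).comp ρ.asAlgebraHom.toLinearMap =
      ((MonoidAlgebra.basis G R).equiv b (.refl G)).toLinearMap :=
    (MonoidAlgebra.basis G R).ext fun g => by
      rw [LinearEquiv.coe_coe, Module.Basis.equiv_apply, hb]
      simp
  convert ((MonoidAlgebra.basis G R).equiv b (.refl G)).bijective using 1
  exact congrArg DFunLike.coe hL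

theorem unit_group_acts_simply_transitively_on_normal_elements_general
    (R S : Type*) [CommRing R] [CommRing S] [Algebra R S]
    (G : Type*) [Group G] [Fintype G] (ρ : G →* (S ≃ₐ[R] S))
    (x : S) (hx1 : Algebra.trace R S x = 1)
    (hxb : ∃ b : Module.Basis G R S, ∀ g : G, b g = ρ g x)
    (y : S) (hy1 : Algebra.trace R S y = 1)
    (hyb : ∃ b : Module.Basis G R S, ∀ g : G, b g = ρ g y) :
    ∃! a : G → R,
      (∑ g : G, a g = 1) ∧
      IsUnit (∑ g : G, MonoidAlgebra.single g (a g) : MonoidAlgebra R G) ∧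
      y = ∑ g : G, a g • ρ g x := by
  obtain ⟨b, hb⟩ := hxb
  obtain ⟨c, hc⟩ := hyb
  let ρR : Representation R G S := (AlgEquiv.toLinearMapHom R S).comp ρ
  have hy : ∑ g, b.repr y g • ρ g x = y := by
    simpa only [hb] using b.sum_repr y
  have hsum : ∑ g, b.repr y g = 1 := by
    have htr := congrArg (Algebra.trace R S) hy
    simpa only [hy1, map_sum, map_smul, Algebra.trace_eq_of_algEquiv, hx1, smul_eq_mul, mul_one]
      using htr
  have hunit : IsUnit (∑ g, MonoidAlgebra.single g (b.repr y g)) :=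
    isUnit_of_apply_eq_of_bijective ρR.asAlgebraHom
      (ρR.bijective_asAlgebraHom_apply_of_basis b hb) (ρR.bijective_asAlgebraHom_apply_of_basis c hc)
      (by simp [ρR, Representation.asAlgebraHom_single, hy])
  refine ⟨fun g => b.repr y g, ⟨hsum, hunit, hy.symm⟩, fun a ⟨_, _, ha⟩ => ?_⟩
  funext g
  simp only [ha, ← hb, b.repr_sum_self]

/-- For a `G`-Galois algebra `S/R` with normal element `x`, the group
`U_G(R) = {u = Σ a_g [g] ∈ R[G]ˣ : Σ a_g = 1}` acts freely and transitively on the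
normal elements of `S`: every normal element `y` of `S` equals `Σ a_g g(x)` for a
unique `u = Σ a_g [g] ∈ U_G(R)`. -/
theorem unit_group_acts_simply_transitively_on_normal_elements
    (R S : Type*) [CommRing R] [CommRing S] [Algebra R S]
    (G : Type*) [Group G] [Fintype G] (ρ : G →* (S ≃ₐ[R] S))
    (hGinv : ∀ s : S, (∀ g : G, ρ g s = s) → s ∈ (algebraMap R S).range)
    (hgal : Function.Bijective (galoisMap R S G ρ))
    (x : S) (hx1 : Algebra.trace R S x = 1)
    (hxb : ∃ b : Module.Basis G R S, ∀ g : G, b g = ρ g x)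
    (y : S) (hy1 : Algebra.trace R S y = 1)
    (hyb : ∃ b : Module.Basis G R S, ∀ g : G, b g = ρ g y) :
    ∃! a : G → R,
      (∑ g : G, a g = 1) ∧
      IsUnit (∑ g : G, MonoidAlgebra.single g (a g) : MonoidAlgebra R G) ∧
      y = ∑ g : G, a g • ρ g x :=
  unit_group_acts_simply_transitively_on_normal_elements_general R S G ρ x hx1 hxb y hy1 hyb
end

section
/- Let K be a number field, T an order of K, and I a nonzero fractional T-ideal. If P is a projective (equivalently, invertible) fractional T-ideal, then dis(P·I) = dis(I), where dis(J) = N_{O_K}(O_K J)/N_T(J). -/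
/-!
By the cocycle rule `[A : C] = [A : B] [B : C]` for generalized indices, `dis(P I) = dis(I)`
reduces to `[I : P I] = [O_K I : P O_K I]`, i.e. to the independence of `[M : P M]` from the
`T`-lattice `M`. For `M ≤ N` with `d N ⊆ M` this is local at the primes of `T` above `d`: the
Chinese remainder theorem gives `x ∈ P⁻¹` with `x P + d T = T`, and then `M / x P M ≅ N / x P N`.
Since `[L : x L]` does not depend on the lattice `L`, the factor `x` cancels.
-/

/-- Generalized index `[A : B]` of two sublattices of `K`, valued in `ℚ`:
`[A : B] = [A : A ∩ B] / [B : A ∩ B]` (as group indices). -/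
noncomputable def genIdx {K : Type*} [Field K] (A B : Submodule ℤ K) : ℚ :=
  (AddSubgroup.relIndex B.toAddSubgroup A.toAddSubgroup : ℚ) /
    (AddSubgroup.relIndex A.toAddSubgroup B.toAddSubgroup : ℚ)

/-- The ring of integers `O_K` of `K` as a `ℤ`-submodule of `K`. -/
noncomputable def intLat (K : Type*) [Field K] : Submodule ℤ K :=
  Subalgebra.toSubmodule (integralClosure ℤ K)

/-- The discrepancy `dis(I) = N_{O_K}(O_K·I) / N_T(I)` of a fractional `T`-ideal `I`,
where `N_T(I) = [T : I]` and `N_{O_K}(O_K I) = [O_K : O_K I]` are generalized indices. -/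
noncomputable def discrepancy {K : Type*} [Field K] (T I : Submodule ℤ K) : ℚ :=
  genIdx (intLat K) (intLat K * I) / genIdx T I

open Pointwise

namespace AddSubgroup

variable {G : Type*} [AddGroup G] {A B C D : AddSubgroup G}

theorem relIndex_div_relIndex_eq_of_le (hDA : D ≤ A) (hDB : D ≤ B) (hD : D.relIndex A ≠ 0) :
    (B.relIndex A : ℚ) / A.relIndex B = D.relIndex A / D.relIndex B := by
  have hA : D.relIndex (A ⊓ B) * B.relIndex A = D.relIndex A := by
    rw [← inf_relIndex_left A B, relIndex_mul_relIndex _ _ _ (le_inf hDA hDB) inf_le_left]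
  have hB : D.relIndex (A ⊓ B) * A.relIndex B = D.relIndex B := by
    rw [← inf_relIndex_right A B, relIndex_mul_relIndex _ _ _ (le_inf hDA hDB) inf_le_right]
  have hm : (D.relIndex (A ⊓ B) : ℚ) ≠ 0 := Nat.cast_ne_zero.2 (left_ne_zero_of_mul (hA ▸ hD))
  rw [← hA, ← hB, Nat.cast_mul, Nat.cast_mul, mul_div_mul_left _ _ hm]

theorem relIndex_div_relIndex_mul_relIndex_div_relIndex (hBA : B.relIndex A ≠ 0)
    (hCA : C.relIndex A ≠ 0) (hAB : A.relIndex B ≠ 0) (hCB : C.relIndex B ≠ 0) :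
    (B.relIndex A : ℚ) / A.relIndex B * (C.relIndex B / B.relIndex C) =
      C.relIndex A / A.relIndex C := by
  set D := A ⊓ B ⊓ C
  have hDA : D.relIndex A ≠ 0 := relIndex_inf_ne_zero (relIndex_inf_ne_zero (by simp) hBA) hCA
  have hDB : D.relIndex B ≠ 0 := relIndex_inf_ne_zero (relIndex_inf_ne_zero hAB (by simp)) hCB
  rw [relIndex_div_relIndex_eq_of_le (D := D) (inf_le_left.trans inf_le_left)
      (inf_le_left.trans inf_le_right) hDA,
    relIndex_div_relIndex_eq_of_le (D := D) (inf_le_left.trans inf_le_right) inf_le_right hDB,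
    relIndex_div_relIndex_eq_of_le (D := D) (inf_le_left.trans inf_le_left) inf_le_right hDA,
    div_mul_div_cancel₀ (Nat.cast_ne_zero.2 hDB)]

end AddSubgroup

theorem Ideal.finite_setOf_le_of_finite_quotient {R : Type*} [CommRing R] (I : Ideal R)
    [Finite (R ⧸ I)] : {m : Ideal R | I ≤ m}.Finite := by
  have : Finite (Ideal (R ⧸ I)) := Finite.of_injective _ SetLike.coe_injective
  exact (Set.finite_range (Ideal.comap (Ideal.Quotient.mk I))).subset
    fun m hm ↦ ⟨m.map _, Ideal.comap_map_mk hm⟩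

theorem Submodule.exists_mem_forall_notMem_of_isMaximal {R M : Type*} [CommRing R]
    [AddCommGroup M] [Module R M] {s : Set (Ideal R)} (hs : s.Finite)
    (hmax : ∀ m ∈ s, m.IsMaximal) {N : Submodule R M} {V : Ideal R → Submodule R M}
    (hNV : ∀ m ∈ s, m • N ≤ V m) (hV : ∀ m ∈ s, ¬ N ≤ V m) : ∃ x ∈ N, ∀ m ∈ s, x ∉ V m := by
  classical
  have := hs.fintype
  choose v hvN hvV using fun m : s ↦ SetLike.not_le_iff_exists.1 (hV m m.2)
  have hcop : Pairwise (Function.onFun IsCoprime fun m : s ↦ (m : Ideal R)) := fun m m' hne ↦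
    Ideal.isCoprime_iff_sup_eq.2 <|
      (hmax m m.2).coprime_of_ne (hmax m' m'.2) (Subtype.coe_injective.ne hne)
  -- `e m ≡ 1` modulo `m` and `e m ≡ 0` modulo the other ideals of `s`
  choose e he using fun m : s ↦
    Ideal.exists_forall_sub_mem_ideal hcop (Pi.single (M := fun _ ↦ R) m 1)
  refine ⟨∑ m, e m • v m, sum_mem fun m _ ↦ N.smul_mem _ (hvN m), fun m hm hmem ↦ hvV ⟨m, hm⟩ ?_⟩
  have hsub : ∑ m', e m' • v m' - v ⟨m, hm⟩ ∈ V m := by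
    have : ∑ m', e m' • v m' - v ⟨m, hm⟩ =
        ∑ m', (e m' - Pi.single (M := fun _ ↦ R) m' 1 ⟨m, hm⟩) • v m' := by
      simp [sub_smul, Finset.sum_sub_distrib, Pi.single_apply]
    rw [this]
    exact hNV m hm (sum_mem fun m' _ ↦ Submodule.smul_mem_smul (he m' ⟨m, hm⟩) (hvN m'))
  simpa using (V m).sub_mem hmem hsub

theorem Submodule.exists_mem_comap_smul_sup_eq_top {R A : Type*} [CommRing R] [CommRing A]
    [Algebra R A] [FaithfulSMul R A] {P Q : Submodule R A} (hPQ : P * Q = 1) {I : Ideal R}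
    (hI : {m : Ideal R | m.IsMaximal ∧ I ≤ m}.Finite) :
    ∃ x ∈ Q, (x • P).comap (Algebra.linearMap R A) ⊔ I = ⊤ := by
  let V (m : Ideal R) : Submodule R A :=
    ⨅ p ∈ P, (Submodule.map (Algebra.linearMap R A) m).comap (LinearMap.mulRight R p)
  have hV : ∀ m x, x ∈ V m ↔ ∀ p ∈ P, ∃ r ∈ m, algebraMap R A r = x * p := by
    simp [V]
  have hQP : ∀ q ∈ Q, ∀ p ∈ P, ∃ r, algebraMap R A r = q * p := fun q hq p hp ↦
    Submodule.mem_one.1 (hPQ ▸ mul_comm q p ▸ Submodule.mul_mem_mul hp hq)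
  have hmV : ∀ m ∈ {m : Ideal R | m.IsMaximal ∧ I ≤ m}, m • Q ≤ V m := by
    refine fun m _ ↦ Submodule.smul_le.2 fun r hr q hq ↦ (hV m _).2 fun p hp ↦ ?_
    obtain ⟨y, hy⟩ := hQP q hq p hp
    exact ⟨r * y, m.mul_mem_right y hr, by rw [map_mul, hy, smul_mul_assoc, Algebra.smul_def]⟩
  have hQV : ∀ m ∈ {m : Ideal R | m.IsMaximal ∧ I ≤ m}, ¬ Q ≤ V m := by
    rintro m ⟨hm, -⟩ hQV
    obtain ⟨r, hr, hr1⟩ : (1 : A) ∈ Submodule.map (Algebra.linearMap R A) m := by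
      refine Submodule.mul_induction_on (hPQ ▸ Submodule.one_le.1 le_rfl : (1 : A) ∈ P * Q)
        (fun p hp q hq ↦ ?_) fun _ _ ↦ add_mem
      obtain ⟨r, hr, hrq⟩ := (hV m q).1 (hQV hq) p hp
      exact ⟨r, hr, by rw [mul_comm p q, ← hrq]; rfl⟩
    obtain rfl : r = 1 := FaithfulSMul.algebraMap_injective R A (by simpa using hr1)
    exact hm.ne_top ((Ideal.eq_top_iff_one m).2 hr)
  obtain ⟨x, hxQ, hxV⟩ :=
    Submodule.exists_mem_forall_notMem_of_isMaximal hI (fun m hm ↦ hm.1) hmV hQV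
  refine ⟨x, hxQ, by_contra fun hne ↦ ?_⟩
  obtain ⟨m, hm, hJm⟩ := Ideal.exists_le_maximal _ hne
  refine hxV m ⟨hm, le_sup_right.trans hJm⟩ ((hV m x).2 fun p hp ↦ ?_)
  obtain ⟨y, hy⟩ := hQP x hxQ p hp
  refine ⟨y, hJm (Ideal.mem_sup_left ?_), hy⟩
  show algebraMap R A y ∈ x • P
  exact hy ▸ Submodule.smul_mem_pointwise_smul p x P hp

def Submodule.toSubalgebraOfMulLe {R A : Type*} [CommSemiring R] [Semiring A] [Algebra R A]
    (T : Submodule R A) (hT1 : (1 : A) ∈ T) (hTmul : T * T ≤ T) : Subalgebra R A :=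
  T.toSubalgebra hT1 fun _ _ hx hy ↦ hTmul (Submodule.mul_mem_mul hx hy)

section Field

variable {K : Type*} [Field K]

theorem genIdx_self (A : Submodule ℤ K) : genIdx A A = 1 := by
  simp [genIdx]

theorem genIdx_of_le {A B : Submodule ℤ K} (hBA : B ≤ A) :
    genIdx A B = B.toAddSubgroup.relIndex A.toAddSubgroup := by
  simp [genIdx, AddSubgroup.relIndex_eq_one.2 (show B.toAddSubgroup ≤ A.toAddSubgroup from hBA)]

theorem genIdx_smul_smul {x : K} (hx : x ≠ 0) (A B : Submodule ℤ K) :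
    genIdx (x • A) (x • B) = genIdx A B := by
  have hmap : ∀ L : Submodule ℤ K,
      (x • L).toAddSubgroup = L.toAddSubgroup.map (DistribMulAction.toAddMonoidEnd K K x) :=
    fun L ↦ by rw [Submodule.pointwise_smul_toAddSubgroup, AddSubgroup.pointwise_smul_def]
  have hinj : Function.Injective (DistribMulAction.toAddMonoidEnd K K x) :=
    smul_right_injective K hx
  simp only [genIdx, hmap, AddSubgroup.relIndex_map_map_of_injective _ _ hinj]

theorem genIdx_mul_eq_of_add_mul_eq_one {T J M N : Submodule ℤ K} (hJT : J ≤ T)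
    (hTM : T * M ≤ M) (hTN : T * N ≤ N) (hMN : M ≤ N) {d : K} (hdN : d • N ≤ M)
    (hJ : ∃ j ∈ J, ∃ t ∈ T, j + d * t = 1) :
    genIdx M (J * M) = genIdx N (J * N) := by
  obtain ⟨j, hj, t, ht, hjt⟩ := hJ
  have hJM : J * M ≤ M := (mul_le_mul_left hJT M).trans hTM
  have hJN : J * N ≤ N := (mul_le_mul_left hJT N).trans hTN
  have hsplit (z : K) : z = j * z + d * (t * z) := by linear_combination (-z) * hjt
  have hsup : M ⊔ J * N = N := by
    refine le_antisymm (sup_le hMN hJN) fun n hn ↦ (hsplit n).symm ▸ add_mem ?_ ?_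
    · exact Submodule.mem_sup_right (Submodule.mul_mem_mul hj hn)
    · exact Submodule.mem_sup_left
        (hdN (Submodule.smul_mem_pointwise_smul _ d N (hTN (Submodule.mul_mem_mul ht hn))))
  have hinf : M ⊓ J * N = J * M := by
    refine le_antisymm (fun z ⟨hzM, hzJN⟩ ↦ (hsplit z).symm ▸ add_mem ?_ ?_)
      (le_inf hJM (mul_le_mul_right hMN J))
    · exact Submodule.mul_mem_mul hj hzM
    · have hTJN : T * (J * N) ≤ J * N := mul_left_comm J T N ▸ mul_le_mul_right hTN J
      have hdJN : d • (J * N) ≤ J * M := mul_smul_comm d J N ▸ mul_le_mul_right hdN J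
      exact hdJN (Submodule.smul_mem_pointwise_smul _ d _ (hTJN (Submodule.mul_mem_mul ht hzJN)))
  rw [genIdx_of_le hJM, genIdx_of_le hJN]
  congr 1
  -- `M / (M ⊓ J N) ≅ (M ⊔ J N) / J N`
  calc (J * M).toAddSubgroup.relIndex M.toAddSubgroup
      = (M.toAddSubgroup ⊓ (J * N).toAddSubgroup).relIndex M.toAddSubgroup := by rw [← hinf]; rfl
    _ = (J * N).toAddSubgroup.relIndex M.toAddSubgroup := AddSubgroup.inf_relIndex_left _ _
    _ = (J * N).toAddSubgroup.relIndex (M.toAddSubgroup ⊔ (J * N).toAddSubgroup) :=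
      (AddSubgroup.relIndex_sup_right _ _).symm
    _ = (J * N).toAddSubgroup.relIndex N.toAddSubgroup := by
      rw [← Submodule.sup_toAddSubgroup, hsup]

theorem le_intLat {T : Submodule ℤ K} (hT1 : (1 : K) ∈ T) (hTmul : T * T ≤ T) (hTfg : T.FG) :
    T ≤ intLat K :=
  fun z hz ↦ IsIntegral.of_mem_of_fg (T.toSubalgebraOfMulLe hT1 hTmul)
    (by simpa [Submodule.toSubalgebraOfMulLe] using hTfg) z hz

end Field

section CharZero

variable {K : Type*} [Field K] [CharZero K] {A B C : Submodule ℤ K}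

def IsFullLattice (A : Submodule ℤ K) : Prop :=
  A.FG ∧ Submodule.span ℚ (A : Set K) = ⊤

theorem exists_int_smul_mem_of_span_eq_top (hB : Submodule.span ℚ (B : Set K) = ⊤) (x : K) :
    ∃ d : ℤ, d ≠ 0 ∧ d • x ∈ B := by
  obtain ⟨⟨d, hd⟩, hdx⟩ := multiple_mem_span_of_mem_localization_span (nonZeroDivisors ℤ) ℚ
    (B : Set K) x (hB ▸ Submodule.mem_top)
  exact ⟨d, nonZeroDivisors.ne_zero hd, by simpa using hdx⟩

theorem relIndex_ne_zero_of_span_eq_top (hA : A.FG) (hB : Submodule.span ℚ (B : Set K) = ⊤) :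
    B.toAddSubgroup.relIndex A.toAddSubgroup ≠ 0 := by
  have : AddGroup.FG A.toAddSubgroup :=
    (AddGroup.fg_iff_addSubgroup_fg _).2 (Submodule.fg_toAddSubgroup hA)
  have : Finite (A.toAddSubgroup ⧸ B.toAddSubgroup.addSubgroupOf A.toAddSubgroup) := by
    refine AddCommGroup.finite_of_fg_isAddTorsion _ fun g ↦ ?_
    induction g using QuotientAddGroup.induction_on with | H a => ?_
    obtain ⟨d, hd, hda⟩ := exists_int_smul_mem_of_span_eq_top hB a
    refine (isOfFinAddOrder_iff_zsmul_eq_zero).2 ⟨d, hd, ?_⟩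
    rw [← QuotientAddGroup.mk_zsmul, QuotientAddGroup.eq_zero_iff]
    exact hda
  exact AddSubgroup.index_ne_zero_of_finite

theorem IsFullLattice.relIndex_ne_zero (hA : IsFullLattice A) (hB : IsFullLattice B) :
    B.toAddSubgroup.relIndex A.toAddSubgroup ≠ 0 :=
  relIndex_ne_zero_of_span_eq_top hA.1 hB.2

theorem genIdx_mul_genIdx (hA : IsFullLattice A) (hB : IsFullLattice B) (hC : IsFullLattice C) :
    genIdx A B * genIdx B C = genIdx A C :=
  AddSubgroup.relIndex_div_relIndex_mul_relIndex_div_relIndex (hA.relIndex_ne_zero hB)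
    (hA.relIndex_ne_zero hC) (hB.relIndex_ne_zero hA) (hB.relIndex_ne_zero hC)

theorem genIdx_ne_zero (hA : IsFullLattice A) (hB : IsFullLattice B) : genIdx A B ≠ 0 :=
  div_ne_zero (Nat.cast_ne_zero.2 (hA.relIndex_ne_zero hB))
    (Nat.cast_ne_zero.2 (hB.relIndex_ne_zero hA))

theorem span_rat_eq_top_of_smul_le {x : K} (hx : x ≠ 0)
    (hB : Submodule.span ℚ (B : Set K) = ⊤) (h : x • B ≤ C) :
    Submodule.span ℚ (C : Set K) = ⊤ := by
  refine eq_top_iff.2 fun z _ ↦ ?_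
  have hz : x⁻¹ * z ∈ Submodule.span ℚ (B : Set K) := hB ▸ Submodule.mem_top
  have : x • Submodule.span ℚ (B : Set K) ≤ Submodule.span ℚ (C : Set K) := by
    rw [← Submodule.span_smul]
    exact Submodule.span_mono (by rw [← Submodule.coe_pointwise_smul]; exact h)
  simpa [mul_inv_cancel_left₀ hx] using this (Submodule.smul_mem_pointwise_smul _ x _ hz)

theorem IsFullLattice.smul (hA : IsFullLattice A) {x : K} (hx : x ≠ 0) :
    IsFullLattice (x • A) :=
  ⟨by rw [Submodule.pointwise_smul_def]; exact hA.1.map _,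
    span_rat_eq_top_of_smul_le hx hA.2 le_rfl⟩

theorem genIdx_smul_eq (hA : IsFullLattice A) (hB : IsFullLattice B) {x : K} (hx : x ≠ 0) :
    genIdx A (x • A) = genIdx B (x • B) := by
  calc genIdx A (x • A) = genIdx A B * genIdx B (x • B) * genIdx (x • B) (x • A) := by
        rw [genIdx_mul_genIdx hA hB (hB.smul hx), genIdx_mul_genIdx hA (hB.smul hx) (hA.smul hx)]
    _ = genIdx B (x • B) * (genIdx A B * genIdx B A) := by rw [genIdx_smul_smul hx]; ring
    _ = genIdx B (x • B) := by rw [genIdx_mul_genIdx hA hB hA, genIdx_self, mul_one]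

theorem IsFullLattice.mul (hA : IsFullLattice A) (hB : IsFullLattice B) :
    IsFullLattice (A * B) := by
  obtain ⟨a, haA, ha0⟩ := (Submodule.ne_bot_iff A).1 fun h ↦ by
    simpa [h] using hA.2
  refine ⟨hA.1.mul hB.1, span_rat_eq_top_of_smul_le ha0 hB.2 ?_⟩
  rw [← Submodule.span_singleton_mul]
  exact mul_le_mul_left (by simpa using haA) B

theorem IsFullLattice.of_fractional {T : Submodule ℤ K} (hT : IsFullLattice T) (hA0 : A ≠ ⊥)
    (hTA : T * A ≤ A) {d : K} (hd : d ≠ 0) (hdA : ∀ x ∈ A, d * x ∈ T) : IsFullLattice A := by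
  obtain ⟨a, haA, ha0⟩ := (Submodule.ne_bot_iff A).1 hA0
  refine ⟨?_, span_rat_eq_top_of_smul_le ha0 hT.2 ?_⟩
  · have hFG : (d⁻¹ • d • A).FG := by
      rw [Submodule.pointwise_smul_def]
      refine (hT.1.of_le fun _ hy ↦ ?_).map _
      obtain ⟨x, hx, rfl⟩ := (Submodule.mem_smul_pointwise_iff_exists _ _ _).1 hy
      exact hdA x hx
    rwa [smul_smul, inv_mul_cancel₀ hd, one_smul] at hFG
  · rw [← Submodule.span_singleton_mul, mul_comm]
    exact (mul_le_mul_right ((Submodule.span_singleton_le_iff_mem _ _).2 haA) T).trans hTA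

theorem exists_mem_ne_zero_smul_add_intCast_mul_eq_one {T P Q : Submodule ℤ K}
    (hT1 : (1 : K) ∈ T) (hTmul : T * T ≤ T) (hTfg : T.FG) (hTP : T * P ≤ P) (hTQ : T * Q ≤ Q)
    (hPQ : P * Q = T) {d : ℤ} (hd : d ≠ 0) :
    ∃ x ∈ Q, x ≠ 0 ∧ ∃ j ∈ x • P, ∃ t ∈ T, j + d * t = 1 := by
  let S := T.toSubalgebraOfMulLe hT1 hTmul
  have : Module.Finite ℤ S :=
    Module.Finite.iff_fg.2 (by simpa [S, Submodule.toSubalgebraOfMulLe] using hTfg)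
  have : Finite (S ⧸ Ideal.span {(d : S)}) :=
    Ideal.finiteQuotientOfFreeOfNeBot _ (by simpa using hd)
  let ofT (L : Submodule ℤ K) (hL : T * L ≤ L) : Submodule S K :=
    { L.toAddSubmonoid with smul_mem' := fun r _ h ↦ hL (Submodule.mul_mem_mul r.2 h) }
  have hPQS : ofT P hTP * ofT Q hTQ = 1 := by
    apply Submodule.restrictScalars_injective ℤ
    rw [Submodule.restrictScalars_mul]
    change P * Q = _
    ext z
    rw [hPQ, Submodule.restrictScalars_mem, Submodule.mem_one]
    exact ⟨fun hz ↦ ⟨⟨z, hz⟩, rfl⟩, by rintro ⟨y, rfl⟩; exact y.2⟩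
  obtain ⟨x, hxQ, hx⟩ := Submodule.exists_mem_comap_smul_sup_eq_top hPQS
    ((Ideal.finite_setOf_le_of_finite_quotient (Ideal.span {(d : S)})).subset fun m hm ↦ hm.2)
  obtain ⟨a, ha, b, hb, hab⟩ := Submodule.mem_sup.1 (hx ▸ Submodule.mem_top : (1 : S) ∈ _ ⊔ _)
  obtain ⟨c, rfl⟩ := Ideal.mem_span_singleton'.1 hb
  have hdc : (a : K) + d * c = 1 := by simpa [mul_comm] using congrArg Subtype.val hab
  rcases eq_or_ne x 0 with rfl | hx0
  · -- then `d` is a unit of `T`, and any nonzero `x ∈ Q` will do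
    obtain ⟨q, hq, hq0⟩ := (Submodule.ne_bot_iff Q).1 fun h ↦ by
      simpa [h] using (hPQ ▸ hT1 : (1 : K) ∈ P * Q)
    have ha0 : (a : K) = 0 := by simpa using (show (a : K) ∈ (0 : K) • P from ha)
    exact ⟨q, hq, hq0, 0, zero_mem _, c, c.2, by rwa [ha0] at hdc⟩
  · exact ⟨x, hxQ, hx0, a, ha, c, c.2, hdc⟩

theorem genIdx_mul_eq_of_le {T P Q M N : Submodule ℤ K} (hT1 : (1 : K) ∈ T)
    (hTmul : T * T ≤ T) (hTfg : T.FG) (hP : IsFullLattice P) (hTP : T * P ≤ P) (hTQ : T * Q ≤ Q)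
    (hPQ : P * Q = T) (hM : IsFullLattice M) (hN : IsFullLattice N) (hTM : T * M ≤ M)
    (hTN : T * N ≤ N) (hMN : M ≤ N) :
    genIdx M (P * M) = genIdx N (P * N) := by
  set n := M.toAddSubgroup.relIndex N.toAddSubgroup
  have hnN : (n : K) • N ≤ M := fun _ hz ↦ by
    obtain ⟨y, hy, rfl⟩ := (Submodule.mem_smul_pointwise_iff_exists _ _ _).1 hz
    simpa using M.toAddSubgroup.nsmul_relIndex_mem hy
  obtain ⟨x, hxQ, hx, j, hj, t, ht, hjt⟩ := exists_mem_ne_zero_smul_add_intCast_mul_eq_one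
    hT1 hTmul hTfg hTP hTQ hPQ (Int.natCast_ne_zero.2 (hN.relIndex_ne_zero hM))
  have hxP : x • P ≤ T := by
    rw [← Submodule.span_singleton_mul, mul_comm, ← hPQ]
    exact mul_le_mul_right ((Submodule.span_singleton_le_iff_mem _ _).2 hxQ) P
  have key := genIdx_mul_eq_of_add_mul_eq_one hxP hTM hTN hMN hnN ⟨j, hj, t, ht, by simpa using hjt⟩
  rw [smul_mul_assoc, smul_mul_assoc, ← genIdx_mul_genIdx hM (hP.mul hM) ((hP.mul hM).smul hx),
    ← genIdx_mul_genIdx hN (hP.mul hN) ((hP.mul hN).smul hx),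
    genIdx_smul_eq (hP.mul hM) (hP.mul hN) hx] at key
  exact mul_right_cancel₀ (genIdx_ne_zero (hP.mul hN) ((hP.mul hN).smul hx)) key

end CharZero

/-- for an order `T` of a number field `K`, a nonzero fractional
`T`-ideal `I`, and a projective (equivalently invertible) fractional `T`-ideal `P`,
the discrepancy satisfies `dis(P·I) = dis(I)`. -/
theorem discrepancy_mul_invertible
    (K : Type*) [Field K] [NumberField K] (T : Submodule ℤ K)
    (hT1 : (1 : K) ∈ T) (hTmul : T * T ≤ T) (hTfg : T.FG)
    (hTfull : Submodule.span ℚ (T : Set K) = ⊤)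
    (I : Submodule ℤ K) (hI0 : I ≠ ⊥) (hTI : T * I ≤ I)
    (hIfrac : ∃ d ∈ T, d ≠ 0 ∧ ∀ x ∈ I, d * x ∈ T)
    (P : Submodule ℤ K) (hP0 : P ≠ ⊥) (hTP : T * P ≤ P)
    (hPfrac : ∃ d ∈ T, d ≠ 0 ∧ ∀ x ∈ P, d * x ∈ T)
    (hPinv : ∃ Q : Submodule ℤ K, T * Q ≤ Q ∧ P * Q = T) :
    discrepancy T (P * I) = discrepancy T I := by
  obtain ⟨Q, hTQ, hPQ⟩ := hPinv
  obtain ⟨dI, -, hdI, hdII⟩ := hIfrac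
  obtain ⟨dP, -, hdP, hdPP⟩ := hPfrac
  have hT : IsFullLattice T := ⟨hTfg, hTfull⟩
  have hI := hT.of_fractional hI0 hTI hdI hdII
  have hP := hT.of_fractional hP0 hTP hdP hdPP
  have hTO : T ≤ intLat K := le_intLat hT1 hTmul hTfg
  have hO : IsFullLattice (intLat K) :=
    ⟨(Submodule.fg_top _).1 (Module.Finite.fg_top (R := ℤ) (M := NumberField.RingOfIntegers K)),
      eq_top_mono (Submodule.span_mono hTO) hTfull⟩
  have hOO : intLat K * intLat K ≤ intLat K :=
    Submodule.mul_le.2 fun _ ha _ hb ↦ (integralClosure ℤ K).mul_mem ha hb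
  have hOI := hO.mul hI
  have key : genIdx I (P * I) = genIdx (intLat K * I) (P * (intLat K * I)) :=
    genIdx_mul_eq_of_le hT1 hTmul hTfg hP hTP hTQ hPQ hI hOI hTI
      (mul_assoc T _ I ▸ mul_le_mul_left ((mul_le_mul_left hTO _).trans hOO) I)
      (le_mul_of_one_le_left' (Submodule.one_le.2 (integralClosure ℤ K).one_mem))
  rw [discrepancy, discrepancy, mul_left_comm, ← genIdx_mul_genIdx hO hOI (hP.mul hOI),
    ← genIdx_mul_genIdx hT hI (hP.mul hI), ← key,
    mul_div_mul_right _ _ (genIdx_ne_zero hI (hP.mul hI))]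
end

section
/- Let K be a number field, T an order of K with ring of integers O_K and conductor f. For every nonzero fractional T-ideal I, the discrepancy satisfies dis(I) ≤ [O_K : T] · [O_K : f]. -/
/-!
On full `ℤ`-lattices of `K` the generalized index is multiplicative, `[A : B][B : C] = [A : C]`,
and `[A : B] ≥ 1` when `B ⊆ A`. With `O = O_K`, this gives
`dis(I) · [O I : I] = [O : O I][O I : I] / [T : I] = [O : I] / [T : I] = [O : T]`,
and both `[O I : I]` and `[O : f]` are at least `1` since `I ⊆ O I` and `f ⊆ T ⊆ O`.
-/

open Submodule

namespace Submodule.IsLattice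

variable {V : Type*} [AddCommGroup V] [Module ℚ V]

theorem relIndex_ne_zero_of_le {M N : Submodule ℤ V} [M.IsLattice ℚ] [N.IsLattice ℚ]
    (h : M ≤ N) : M.toAddSubgroup.relIndex N.toAddSubgroup ≠ 0 := by
  have hrank : Module.finrank ℤ (M.comap N.subtype) = Module.finrank ℤ N := by
    rw [(comapSubtypeEquivOfLe h).finrank_eq, Module.finrank, Module.finrank,
      rank' ℚ M, rank' ℚ N]
  have : Finite (N ⧸ M.comap N.subtype) := finiteQuotientOfFreeOfRankEq _ hrank
  exact AddSubgroup.index_ne_zero_of_finite (hH := this)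

theorem relIndex_ne_zero [Module.Finite ℚ V] (M N : Submodule ℤ V) [M.IsLattice ℚ]
    [N.IsLattice ℚ] : M.toAddSubgroup.relIndex N.toAddSubgroup ≠ 0 := by
  rw [← AddSubgroup.inf_relIndex_right]
  exact relIndex_ne_zero_of_le (M := M ⊓ N) inf_le_right

end Submodule.IsLattice

section GenIdx

variable {K : Type*} [Field K] [CharZero K] [FiniteDimensional ℚ K]

theorem genIdx_eq_div_relIndex {A B C : Submodule ℤ K} [A.IsLattice ℚ] [B.IsLattice ℚ]
    [C.IsLattice ℚ] (hCA : C ≤ A) (hCB : C ≤ B) :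
    genIdx A B = (C.toAddSubgroup.relIndex A.toAddSubgroup : ℚ) /
      (C.toAddSubgroup.relIndex B.toAddSubgroup : ℚ) := by
  have hCD : C ≤ A ⊓ B := le_inf hCA hCB
  have hC0 : (C.toAddSubgroup.relIndex (A ⊓ B).toAddSubgroup : ℚ) ≠ 0 :=
    Nat.cast_ne_zero.mpr (IsLattice.relIndex_ne_zero _ _)
  rw [← AddSubgroup.relIndex_mul_relIndex _ (A ⊓ B).toAddSubgroup _ hCD
      (toAddSubgroup_mono inf_le_left),
    ← AddSubgroup.relIndex_mul_relIndex _ (A ⊓ B).toAddSubgroup _ hCD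
      (toAddSubgroup_mono inf_le_right),
    Nat.cast_mul, Nat.cast_mul, mul_div_mul_left _ _ hC0, genIdx]
  exact congr_arg₂ _ (congr_arg _ (AddSubgroup.inf_relIndex_left _ _).symm)
    (congr_arg _ (AddSubgroup.inf_relIndex_right _ _).symm)

theorem genIdx_mul_genIdx_s9 (A B C : Submodule ℤ K) [A.IsLattice ℚ] [B.IsLattice ℚ]
    [C.IsLattice ℚ] : genIdx A B * genIdx B C = genIdx A C := by
  set D := A ⊓ B ⊓ C
  have hDA : D ≤ A := inf_le_left.trans inf_le_left
  have hDB : D ≤ B := inf_le_left.trans inf_le_right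
  have hDC : D ≤ C := inf_le_right
  have hD0 : (D.toAddSubgroup.relIndex B.toAddSubgroup : ℚ) ≠ 0 :=
    Nat.cast_ne_zero.mpr (IsLattice.relIndex_ne_zero _ _)
  rw [genIdx_eq_div_relIndex hDA hDB, genIdx_eq_div_relIndex hDB hDC,
    genIdx_eq_div_relIndex hDA hDC, div_mul_div_cancel₀ hD0]

theorem genIdx_pos (A B : Submodule ℤ K) [A.IsLattice ℚ] [B.IsLattice ℚ] : 0 < genIdx A B :=
  div_pos (Nat.cast_pos.mpr (Nat.pos_of_ne_zero (IsLattice.relIndex_ne_zero _ _)))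
    (Nat.cast_pos.mpr (Nat.pos_of_ne_zero (IsLattice.relIndex_ne_zero _ _)))

theorem one_le_genIdx_of_le {A B : Submodule ℤ K} [A.IsLattice ℚ] [B.IsLattice ℚ] (h : B ≤ A) :
    1 ≤ genIdx A B := by
  rw [genIdx, AddSubgroup.relIndex_eq_one.mpr (toAddSubgroup_mono h), Nat.cast_one, div_one,
    Nat.one_le_cast]
  exact Nat.pos_of_ne_zero (IsLattice.relIndex_ne_zero _ _)

end GenIdx

theorem Submodule.div_le_self_of_one_mem {R A : Type*} [CommSemiring R] [CommSemiring A]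
    [Algebra R A] {I J : Submodule R A} (hJ : (1 : A) ∈ J) : I / J ≤ I := fun x hx => by
  simpa using mem_div_iff_forall_mul_mem.mp hx 1 hJ

section Orders

variable {K : Type*} [Field K]

theorem IsIntegral.of_mem_of_fg_of_mul_le {T : Submodule ℤ K} (hT1 : (1 : K) ∈ T)
    (hTmul : T * T ≤ T) (hTfg : T.FG) {x : K} (hx : x ∈ T) : IsIntegral ℤ x :=
  IsIntegral.of_mem_of_fg (T.toSubalgebra hT1 fun _ _ ha hb => hTmul (mul_mem_mul ha hb))
    hTfg x hx

theorem fg_of_mul_mem {T I : Submodule ℤ K} (hT : T.FG) {d : K} (hd : d ≠ 0)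
    (hdI : ∀ x ∈ I, d * x ∈ T) : I.FG :=
  FG.of_le (hT.map (LinearMap.mulLeft ℤ d⁻¹)) fun x hx =>
    ⟨d * x, hdI x hx, inv_mul_cancel_left₀ hd x⟩

variable [CharZero K]

theorem span_rat_eq_top_of_mul_le {T I : Submodule ℤ K} (hT : span ℚ (T : Set K) = ⊤)
    (hI0 : I ≠ ⊥) (hTI : T * I ≤ I) : span ℚ (I : Set K) = ⊤ := by
  obtain ⟨x, hxI, hx⟩ := (Submodule.ne_bot_iff I).mp hI0
  let L := LinearMap.mulRight ℚ x
  have hL : LinearMap.range L = ⊤ :=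
    LinearMap.range_eq_top.mpr fun y => ⟨y * x⁻¹, by simp [L, hx]⟩
  refine eq_top_iff.mpr ?_
  calc ⊤ = (span ℚ (T : Set K)).map L := by rw [hT, Submodule.map_top, hL]
    _ = span ℚ (L '' T) := map_span _ _
    _ ≤ span ℚ I := span_mono (by rintro _ ⟨t, ht, rfl⟩; exact hTI (mul_mem_mul ht hxI))

theorem isLattice_div [FiniteDimensional ℚ K] {T O : Submodule ℤ K} [T.IsLattice ℚ]
    [O.IsLattice ℚ] (hO1 : (1 : K) ∈ O) (hOmul : O * O ≤ O) : (T / O).IsLattice ℚ := by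
  refine ⟨FG.of_le IsLattice.fg (div_le_self_of_one_mem hO1), eq_top_iff.mpr ?_⟩
  refine (IsLattice.span_eq_top (M := O)).ge.trans (span_le.mpr fun x hx => ?_)
  -- `n = [O : T]` annihilates `O / T`, so `n • O ⊆ T / O`.
  set n := T.toAddSubgroup.relIndex O.toAddSubgroup
  have hn : (n : ℚ) ≠ 0 := Nat.cast_ne_zero.mpr (IsLattice.relIndex_ne_zero _ _)
  have hnx : n • x ∈ T / O := mem_div_iff_forall_mul_mem.mpr fun y hy => by
    rw [smul_mul_assoc]
    exact T.toAddSubgroup.nsmul_relIndex_mem (K := O.toAddSubgroup) (hOmul (mul_mem_mul hx hy))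
  rw [← inv_smul_smul₀ hn x, Nat.cast_smul_eq_nsmul]
  exact smul_mem _ _ (subset_span hnx)

end Orders

namespace NumberField

variable (K : Type*) [Field K] [NumberField K]

instance isLattice_intLat : (intLat K).IsLattice ℚ where
  fg := Module.Finite.iff_fg.mp (inferInstanceAs (Module.Finite ℤ (RingOfIntegers K)))
  span_eq_top := by
    refine eq_top_iff.mpr <| (integralBasis K).span_eq.symm.le.trans (span_mono ?_)
    rintro _ ⟨i, rfl⟩
    rw [integralBasis_apply]
    exact (RingOfIntegers.basis K i).2

end NumberField

/-- for an order `T` of a number field `K` with conductor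
`f = {a ∈ K : a·O_K ⊆ T} = T / O_K`, every nonzero fractional `T`-ideal `I`
satisfies `dis(I) ≤ [O_K : T] · [O_K : f]`. -/
theorem discrepancy_le_index_mul_index_conductor
    (K : Type*) [Field K] [NumberField K] (T : Submodule ℤ K)
    (hT1 : (1 : K) ∈ T) (hTmul : T * T ≤ T) (hTfg : T.FG)
    (hTfull : Submodule.span ℚ (T : Set K) = ⊤)
    (I : Submodule ℤ K) (hI0 : I ≠ ⊥) (hTI : T * I ≤ I)
    (hIfrac : ∃ d ∈ T, d ≠ 0 ∧ ∀ x ∈ I, d * x ∈ T) :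
    discrepancy T I ≤ genIdx (intLat K) T * genIdx (intLat K) (T / intLat K) := by
  set O := intLat K
  have hO1 : (1 : K) ∈ O := one_mem (integralClosure ℤ K)
  have hOmul : O * O ≤ O := (Subalgebra.isIdempotentElem_toSubmodule _).le
  have hTO : T ≤ O := fun _ hx => IsIntegral.of_mem_of_fg_of_mul_le hT1 hTmul hTfg hx
  have hIM : I ≤ O * I := fun x hx => by simpa using mul_mem_mul hO1 hx
  obtain ⟨d, -, hd, hdI⟩ := hIfrac
  have : T.IsLattice ℚ := ⟨hTfg, hTfull⟩
  have : I.IsLattice ℚ := ⟨fg_of_mul_mem hTfg hd hdI, span_rat_eq_top_of_mul_le hTfull hI0 hTI⟩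
  have : (O * I).IsLattice ℚ := .of_le_of_isLattice_of_fg ℚ hIM (IsLattice.fg.mul IsLattice.fg)
  have : (T / O).IsLattice ℚ := isLattice_div hO1 hOmul
  rw [discrepancy, div_le_iff₀ (genIdx_pos T I)]
  calc genIdx O (O * I) ≤ genIdx O (O * I) * genIdx (O * I) I :=
        le_mul_of_one_le_right (genIdx_pos _ _).le (one_le_genIdx_of_le hIM)
    _ = genIdx O T * genIdx T I := by rw [genIdx_mul_genIdx_s9, genIdx_mul_genIdx_s9]
    _ ≤ genIdx O T * genIdx O (T / O) * genIdx T I := by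
        refine mul_le_mul_of_nonneg_right ?_ (genIdx_pos _ _).le
        exact le_mul_of_one_le_right (genIdx_pos _ _).le
          (one_le_genIdx_of_le ((div_le_self_of_one_mem hO1).trans hTO))
end

section
/- Let K be a number field and T an order of K. If T is Gorenstein, then for every nonzero fractional T-ideal I, one has (I : I) = T if and only if I is invertible. -/
/-!
Write `Xᵛ` for the trace dual of a lattice `X ⊆ K`, so that `(X * Y)ᵛ = Yᵛ / X` and `Xᵛᵛ = X`.
If `I / I = T`, then `J := I * Iᵛ` satisfies `Jᵛ = Iᵛᵛ / I = I / I = T`, hence `J = Tᵛ`.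
Since `T` is Gorenstein, `Tᵛ` is invertible, and then so is its factor `I`.
Conversely, an invertible `I` has `(I : I) = (I : I) * I * (T : I) ⊆ I * (T : I) = T`.
-/

/-- The dual lattice `T^∨ = Hom_ℤ(T, ℤ)` of `T`, viewed inside `K` via the trace form:
`{a ∈ K : tr_{K/ℚ}(a·t) ∈ ℤ for all t ∈ T}`. -/
noncomputable def traceDual (K : Type*) [Field K] [NumberField K]
    (T : Submodule ℤ K) : Submodule ℤ K where
  carrier := {a : K | ∀ t ∈ T, ∃ n : ℤ, Algebra.trace ℚ K (a * t) = (n : ℚ)}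
  zero_mem' := fun t _ => ⟨0, by simp⟩
  add_mem' := by
    intro a b ha hb t ht
    obtain ⟨m, hm⟩ := ha t ht
    obtain ⟨n, hn⟩ := hb t ht
    exact ⟨m + n, by rw [add_mul, map_add, hm, hn]; push_cast; ring⟩
  smul_mem' := by
    intro z a ha t ht
    obtain ⟨n, hn⟩ := ha t ht
    exact ⟨z * n, by rw [smul_mul_assoc, map_zsmul, hn, zsmul_eq_mul]; push_cast; ring⟩

namespace Submodule

section Quotient

variable {R A : Type*} [CommSemiring R] [CommSemiring A] [Algebra R A]

theorem div_mul_le (I J : Submodule R A) : J / I * I ≤ J :=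
  le_div_iff_mul_le.mp le_rfl

theorem div_self_eq_of_mul_div_eq {T I : Submodule R A} (hT1 : (1 : A) ∈ T) (hTI : T * I ≤ I)
    (hInv : I * (T / I) = T) : I / I = T := by
  refine le_antisymm ?_ (le_div_iff_mul_le.mpr hTI)
  calc I / I = I / I * 1 := (mul_one _).symm
    _ ≤ I / I * T := mul_le_mul_right (one_le.mpr hT1) _
    _ = I / I * I * (T / I) := by rw [mul_assoc, hInv]
    _ ≤ I * (T / I) := mul_le_mul_left (div_mul_le I I) _
    _ = T := hInv

theorem mul_div_eq_of_mul_eq_of_mul_div_eq {T I I' W : Submodule R A} (hW : I * I' = W)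
    (hWinv : W * (T / W) = T) : I * (T / I) = T := by
  refine le_antisymm (by rw [mul_comm]; exact div_mul_le I T) ?_
  have hI' : I' * (T / W) ≤ T / I :=
    le_div_iff_mul_le.mpr (by rw [mul_comm, ← mul_assoc, hW, hWinv])
  calc T = W * (T / W) := hWinv.symm
    _ = I * (I' * (T / W)) := by rw [← hW, mul_assoc]
    _ ≤ I * (T / I) := mul_le_mul_right hI' _

end Quotient

theorem traceDual_mul {A K L B : Type*} [CommRing A] [Field K] [CommRing B] [Field L]
    [Algebra A K] [Algebra B L] [Algebra A B] [Algebra K L] [Algebra A L]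
    [IsScalarTower A K L] [IsScalarTower A B L] (I J : Submodule B L) :
    traceDual A K (I * J) = traceDual A K J / I := by
  refine le_antisymm ?_ ?_
  · rw [le_div_iff_mul_le, ← le_traceDual_mul_iff, mul_comm]
  · rw [le_traceDual_mul_iff, ← le_div_iff_mul_le]

namespace IsLattice

variable {R K L : Type*} [CommRing R] [Field K] [Algebra R K] [Field L] [Algebra K L]
  [Algebra R L] [IsScalarTower R K L]

theorem ne_bot (M : Submodule R L) [IsLattice K M] : M ≠ ⊥ := by
  intro h
  have := span_eq_top (A := K) (M := M)
  simp [h] at this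

theorem of_mul_mem {M N : Submodule R L} [IsLattice K M] {x : L} (hx : x ≠ 0)
    (hMN : ∀ m ∈ M, x * m ∈ N) (hN : N.FG) : IsLattice K N := by
  refine ⟨hN, eq_top_iff.mpr ?_⟩
  have hsurj : Function.Surjective (LinearMap.mulLeft K x) := fun y => ⟨x⁻¹ * y, by simp [hx]⟩
  rw [← LinearMap.range_eq_top.mpr hsurj, LinearMap.range_eq_map, ← span_eq_top (M := M),
    map_span, span_le]
  rintro _ ⟨m, hm, rfl⟩
  exact subset_span (hMN m hm)

instance mul (M N : Submodule R L) [IsLattice K M] [IsLattice K N] : IsLattice K (M * N) := by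
  obtain ⟨x, hxM, hx0⟩ := M.ne_bot_iff.mp (ne_bot (K := K) M)
  exact of_mul_mem hx0 (fun _ hn => mul_mem_mul hxM hn) (fg.mul fg)

theorem of_fractionalIdeal [IsNoetherianRing R] {T I : Submodule R L} [IsLattice K T]
    (hI0 : I ≠ ⊥) (hTI : T * I ≤ I) {d : L} (hd0 : d ≠ 0) (hdI : ∀ x ∈ I, d * x ∈ T) :
    IsLattice K I := by
  obtain ⟨x, hxI, hx0⟩ := I.ne_bot_iff.mp hI0
  have hI_le : I ≤ T.map (LinearMap.mulLeft R d⁻¹) := fun y hy => ⟨d * y, hdI y hy, by simp [hd0]⟩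
  exact of_mul_mem hx0 (fun t ht => mul_comm t x ▸ hTI (mul_mem_mul ht hxI))
    ((fg.map _).of_le hI_le)

end IsLattice

section TraceDual

open Module

variable {R K L : Type*} [CommRing R] [Field K] [Algebra R K] [IsFractionRing R K]
  [Field L] [Algebra K L] [Algebra R L] [IsScalarTower R K L]

theorem _root_.Module.Basis.span_extendOfIsLattice {ι : Type*} {M : Submodule R L}
    [IsLattice K M] (b : Basis ι R M) : span R (Set.range (b.extendOfIsLattice K)) = M := by
  have : Set.range (b.extendOfIsLattice K) = M.subtype '' Set.range b := by
    rw [← Set.range_comp]; ext; simp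
  rw [this, ← map_span, b.span_eq, Submodule.map_top, range_subtype]

variable [FiniteDimensional K L] [Algebra.IsSeparable K L]

theorem traceDual_eq_span_traceDual {ι : Type*} [Finite ι] [DecidableEq ι] {M : Submodule R L}
    [IsLattice K M] (b : Basis ι R M) :
    traceDual R K M = span R (Set.range (b.extendOfIsLattice K).traceDual) := by
  simpa using traceDual_span_of_basis R M (b.extendOfIsLattice K)
    (by rw [restrictScalars_self, b.span_extendOfIsLattice])

variable [IsDomain R] [IsPrincipalIdealRing R]

instance IsLattice.traceDual (M : Submodule R L) [IsLattice K M] :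
    IsLattice K (traceDual R K M) := by
  classical
  rw [traceDual_eq_span_traceDual (Free.chooseBasis R M)]
  exact ⟨fg_span (Set.finite_range _), by rw [span_span_of_tower, Basis.span_eq]⟩

theorem traceDual_traceDual_of_isLattice (M : Submodule R L) [IsLattice K M] :
    traceDual R K (traceDual R K M) = M := by
  classical
  let b := Free.chooseBasis R M
  have hb := traceDual_eq_span_traceDual b
  have hbb := traceDual_span_of_basis R (traceDual R K M) (b.extendOfIsLattice K).traceDual
    (by rw [restrictScalars_self, hb])
  rw [restrictScalars_self] at hbb
  rw [hbb, Basis.traceDual_traceDual, b.span_extendOfIsLattice]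

theorem mul_traceDual_eq_of_div_self_eq {I T : Submodule R L} [IsLattice K I] (hII : I / I = T) :
    I * traceDual R K I = traceDual R K T := by
  rw [← traceDual_traceDual_of_isLattice (I * _), traceDual_mul,
    traceDual_traceDual_of_isLattice, hII]

end TraceDual

end Submodule

theorem traceDual_eq_submodule_traceDual {K : Type*} [Field K] [NumberField K] (T : Submodule ℤ K) :
    traceDual K T = Submodule.traceDual ℤ ℚ T := by
  ext a
  simp only [Submodule.mem_traceDual, Algebra.traceForm_apply, RingHom.mem_range,
    algebraMap_int_eq, eq_intCast]
  exact forall₂_congr fun _ _ => exists_congr fun _ => eq_comm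

theorem gorenstein_multiplier_ring_eq_iff_invertible_general
    (K : Type*) [Field K] [NumberField K] (T : Submodule ℤ K)
    (hT1 : (1 : K) ∈ T) (hTfg : T.FG)
    (hTfull : Submodule.span ℚ (T : Set K) = ⊤)
    (hGor : traceDual K T * (T / traceDual K T) = T)
    (I : Submodule ℤ K) (hI0 : I ≠ ⊥) (hTI : T * I ≤ I)
    (hIfrac : ∃ d ∈ T, d ≠ 0 ∧ ∀ x ∈ I, d * x ∈ T) :
    I / I = T ↔ I * (T / I) = T := by
  refine ⟨fun hII => ?_, Submodule.div_self_eq_of_mul_div_eq hT1 hTI⟩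
  obtain ⟨d, -, hd0, hdI⟩ := hIfrac
  have : Submodule.IsLattice ℚ T := ⟨hTfg, hTfull⟩
  have : Submodule.IsLattice ℚ I := .of_fractionalIdeal hI0 hTI hd0 hdI
  rw [traceDual_eq_submodule_traceDual] at hGor
  exact Submodule.mul_div_eq_of_mul_eq_of_mul_div_eq
    (Submodule.mul_traceDual_eq_of_div_self_eq hII) hGor

/-- let `T` be an order of a number field `K` which is Gorenstein
(equivalently, the trace-form dual `T^∨` is an invertible `T`-module).  Then a
nonzero fractional `T`-ideal `I` satisfies `(I : I) = T` if and only if `I` is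
invertible, i.e. `I·(T : I) = T`. -/
theorem gorenstein_multiplier_ring_eq_iff_invertible
    (K : Type*) [Field K] [NumberField K] (T : Submodule ℤ K)
    (hT1 : (1 : K) ∈ T) (hTmul : T * T ≤ T) (hTfg : T.FG)
    (hTfull : Submodule.span ℚ (T : Set K) = ⊤)
    (hGor : traceDual K T * (T / traceDual K T) = T)
    (I : Submodule ℤ K) (hI0 : I ≠ ⊥) (hTI : T * I ≤ I)
    (hIfrac : ∃ d ∈ T, d ≠ 0 ∧ ∀ x ∈ I, d * x ∈ T) :
    I / I = T ↔ I * (T / I) = T :=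
  gorenstein_multiplier_ring_eq_iff_invertible_general K T hT1 hTfg hTfull hGor I hI0 hTI hIfrac
end

section
/- Let G be a finite group of order n and exponent e, let V be the regular representation of G over a field k of characteristic zero, and let P(V) be its projectivization with the induced G-action. For each g ∈ G of order d and each primitive d-th root of unity ζ ∈ k̄, the point of P(V)(k̄) spanned by the vector Σ_{j=0}^{d-1} ζ^j [g^j] is fixed by g, and g acts on the fiber of O(t) over this point by multiplication by ζ^t. Consequently, if the G-linearized line bundle O(t) (with the linearization induced from the G-action on V) descends to P(V)/G, then e divides t. -/
/-!
Put `d = orderOf g` and `w = ∑_{j<d} ζ ^ j [g ^ j]`. Right multiplication by `[g]` shifts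
`[g ^ j]` to `[g ^ (j + 1)]`, and since both `g` and `ζ` are `d`-periodic this reindexing
gives `w [g] = ζ⁻¹ w`. The coefficient of `w` at `1` is `1`, so `w ≠ 0`. If every eigenvalue
of every right multiplication `[g]` has `t`-th power `1`, then for a primitive `d`-th root
`ζ` we get `ζ ^ t = 1`, i.e. `orderOf g ∣ t`; as this holds for all `g`, the exponent divides `t`.
-/

open Finset MonoidAlgebra

theorem Finset.sum_range_shift_eq_of_apply_eq {M : Type*} [AddCommMonoid M] [IsRightCancelAdd M]
    (f : ℕ → M) {n : ℕ} (h : f n = f 0) :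
    ∑ j ∈ range n, f (j + 1) = ∑ j ∈ range n, f j :=
  add_right_cancel (b := f 0) <| by rw [← sum_range_succ', sum_range_succ, h]

namespace MonoidAlgebra

variable {k G : Type*} [Field k] [Monoid G]

noncomputable def cyclicEigenvector (g : G) (ζ : k) : MonoidAlgebra k G :=
  ∑ j ∈ range (orderOf g), ζ ^ j • single (g ^ j) 1

theorem cyclicEigenvector_mul_single {g : G} {ζ : k} (hζ : ζ ^ orderOf g = 1) :
    cyclicEigenvector g ζ * single g 1 = ζ⁻¹ • cyclicEigenvector g ζ := by
  rcases (orderOf g).eq_zero_or_pos with hd | hd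
  · simp [cyclicEigenvector, hd]
  have hζ0 : ζ ≠ 0 := by
    rintro rfl
    simp [zero_pow hd.ne'] at hζ
  have hshift : ∀ j, ζ ^ j • single (g ^ j) (1 : k) * single g 1
      = ζ⁻¹ • (ζ ^ (j + 1) • single (g ^ (j + 1)) 1) := fun j => by
    rw [smul_mul_assoc, single_mul_single, mul_one, ← pow_succ, smul_smul, pow_succ' ζ,
      inv_mul_cancel_left₀ hζ0]
  rw [cyclicEigenvector, sum_mul, sum_congr rfl fun j _ => hshift j,
    ← smul_sum, sum_range_shift_eq_of_apply_eq (fun j => ζ ^ j • single (g ^ j) (1 : k))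
      (by simp [hζ, pow_orderOf_eq_one])]

theorem cyclicEigenvector_coeff_one (g : G) (ζ : k) (hd : 0 < orderOf g) :
    (cyclicEigenvector g ζ).coeff 1 = 1 := by
  rw [cyclicEigenvector, coeff_sum, Finset.sum_apply', sum_eq_single_of_mem 0 (mem_range.2 hd)]
  · simp
  · intro j hj hj0
    simp [pow_ne_one_of_lt_orderOf hj0 (mem_range.1 hj)]

theorem cyclicEigenvector_ne_zero (g : G) (ζ : k) (hd : 0 < orderOf g) :
    cyclicEigenvector g ζ ≠ 0 := fun h => by
  simpa [h] using cyclicEigenvector_coeff_one g ζ hd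

theorem orderOf_dvd_of_forall_eigenvalue_pow_eq_one [IsSepClosed k] {g : G} {t : ℕ}
    (hd : (orderOf g : k) ≠ 0)
    (H : ∀ (v : MonoidAlgebra k G) (c : k), v ≠ 0 → v * single g 1 = c • v → c ^ t = 1) :
    orderOf g ∣ t := by
  have : NeZero (orderOf g : k) := ⟨hd⟩
  obtain ⟨ζ, hζ⟩ := HasEnoughRootsOfUnity.exists_primitiveRoot k (orderOf g)
  have hpos : 0 < orderOf g := Nat.pos_of_ne_zero fun h => hd (by simp [h])
  have h := H _ _ (cyclicEigenvector_ne_zero g ζ hpos)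
    (cyclicEigenvector_mul_single hζ.pow_eq_one)
  rw [inv_pow, inv_eq_one] at h
  exact hζ.dvd_of_pow_eq_one t h

end MonoidAlgebra

/-- let `G` be a finite group of exponent `e`, and consider the regular
representation `V = k[G]` over an algebraically closed field `k` of characteristic
zero, with right `G`-action `[h]·g = [hg]`.  For `g ∈ G` of order `d` and a primitive
`d`-th root of unity `ζ`, the vector `w = Σ_{j<d} ζ^j [g^j]` spans a `g`-stable line
(`w·g = ζ⁻¹ • w`, so `g` acts on the fiber of `O(t)` over the corresponding point of
`P(V)` by `ζ^t`).  Consequently, if the `G`-linearized bundle `O(t)` descends to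
`P(V)/G` — i.e., by Kempf's criterion, every stabilizer acts trivially on fibers: for
every `g`-eigenvector `v` with `v·g = c • v` one has `c^t = 1` — then `e ∣ t`. -/
theorem regular_rep_eigenvector_and_descent_implies_exponent_dvd
    (k : Type*) [Field k] [CharZero k] [IsAlgClosed k]
    (G : Type*) [Group G] [Fintype G] (t : ℕ) :
    (∀ (g : G) (ζ : k), IsPrimitiveRoot ζ (orderOf g) →
      (∑ j ∈ Finset.range (orderOf g),
          ζ ^ j • (MonoidAlgebra.single (g ^ j) (1 : k) : MonoidAlgebra k G)) *
        MonoidAlgebra.single g 1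
      = ζ⁻¹ • ∑ j ∈ Finset.range (orderOf g),
          ζ ^ j • (MonoidAlgebra.single (g ^ j) (1 : k) : MonoidAlgebra k G)) ∧
    ((∀ (g : G) (v : MonoidAlgebra k G) (c : k),
        v ≠ 0 → v * MonoidAlgebra.single g 1 = c • v → c ^ t = 1) →
      Monoid.exponent G ∣ t) :=
  ⟨fun _ _ hζ => cyclicEigenvector_mul_single hζ.pow_eq_one,
    fun H => Monoid.exponent_dvd_of_forall_pow_eq_one fun g =>
      orderOf_dvd_iff_pow_eq_one.1 <| orderOf_dvd_of_forall_eigenvalue_pow_eq_one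
        (Nat.cast_ne_zero.2 (orderOf_pos g).ne') (H g)⟩
end
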